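/- arXiv:2508.08871 — 8 statements merged into one kernel-verified Lean document; each statement's English description precedes it below -/
import Mathlib

section
/- For a framed weak f-structure (f, Q, ξ_1, …, ξ_s, η^1, …, η^s) on V one has f ξ_i = 0 and η^i ∘ f = 0 for every i = 1, …, s. -/
/-!
If `f x = 0` then `Q x = ∑ ηⁱ(x) ξᵢ = Q (∑ ηⁱ(x) ξᵢ)`, so `ker f` lies in the span of the `ξᵢ` and
`f` is injective on `D = ⋂ ker ηⁱ`. As `dim D = 2n = rank f` and `f D ⊆ D`, the image of `D`
is all of `range f`, hence `range f ⊆ D`, i.e. `ηⁱ ∘ f = 0`. Finally `f² ξⱼ = -ξⱼ + ξⱼ = 0`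
puts `f ξⱼ` in `ker f`, whose elements are determined by their `ηⁱ`-coefficients, all zero.
-/

open Module LinearMap

section Biorthogonal

variable {K V ι : Type*} [Field K] [AddCommGroup V] [Module K V] [Fintype ι] [DecidableEq ι]
  {ξ : ι → V} {η : ι → V →ₗ[K] K}

theorem apply_sum_smul_of_biorthogonal (hηξ : ∀ i j, η i (ξ j) = if i = j then (1 : K) else 0)
    (c : ι → K) (i : ι) : η i (∑ j, c j • ξ j) = c i := by
  simp [hηξ]

theorem finrank_iInf_ker_add_card_of_biorthogonal [FiniteDimensional K V]
    (hηξ : ∀ i j, η i (ξ j) = if i = j then (1 : K) else 0) :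
    finrank K ↥(⨅ i, ker (η i)) + Fintype.card ι = finrank K V := by
  have hsurj : range (LinearMap.pi η) = ⊤ :=
    range_eq_top.2 fun c => ⟨∑ j, c j • ξ j, funext (apply_sum_smul_of_biorthogonal hηξ c)⟩
  have := finrank_range_add_finrank_ker (LinearMap.pi η)
  rw [hsurj, finrank_top, ker_pi, finrank_fintype_fun_eq_card] at this
  omega

end Biorthogonal

theorem LinearMap.range_le_of_map_le_of_disjoint_ker {K V : Type*} [Field K] [AddCommGroup V]
    [Module K V] [FiniteDimensional K V] {f : V →ₗ[K] V} {D : Submodule K V}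
    (hfD : D.map f ≤ D) (hker : Disjoint D (ker f)) (hrank : finrank K (range f) ≤ finrank K D) :
    range f ≤ D := by
  have hinj : Function.Injective (f.domRestrict D) := injective_domRestrict_iff.2 hker
  have hmap : D.map f = range f := by
    refine Submodule.eq_of_le_of_finrank_le map_le_range ?_
    rwa [← range_domRestrict, finrank_range_of_inj hinj]
  exact hmap ▸ hfD

theorem eq_sum_smul_of_apply_eq_zero {K V ι : Type*} [Field K] [AddCommGroup V] [Module K V]
    [Fintype ι] {f Q : V →ₗ[K] V} {ξ : ι → V} {η : ι → V →ₗ[K] K} (hQ : Function.Injective Q)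
    (hf2 : ∀ X, f (f X) = -(Q X) + ∑ i, η i X • ξ i) (hQξ : ∀ i, Q (ξ i) = ξ i)
    {x : V} (hx : f x = 0) : x = ∑ i, η i x • ξ i := by
  refine hQ ?_
  have hQx := hf2 x
  rw [hx, map_zero, eq_comm, neg_add_eq_zero] at hQx
  simp [hQx, hQξ]

theorem framed_weak_f_structure_f_xi_eq_zero_and_eta_comp_f_eq_zero_general
    {V : Type*} [AddCommGroup V] [Module ℝ V] [FiniteDimensional ℝ V]
    (n s : ℕ)
    (hdim : Module.finrank ℝ V = 2 * n + s)
    (f Q : V →ₗ[ℝ] V) (ξ : Fin s → V) (η : Fin s → V →ₗ[ℝ] ℝ)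
    (hQ : Function.Bijective Q)
    (hrank : Module.finrank ℝ (LinearMap.range f) = 2 * n)
    (hf2 : ∀ X, f (f X) = -(Q X) + ∑ i, η i X • ξ i)
    (hηξ : ∀ i j, η i (ξ j) = if i = j then (1 : ℝ) else 0)
    (hQξ : ∀ i, Q (ξ i) = ξ i)
    (hD : ∀ X, (∀ i, η i X = 0) → ∀ i, η i (f X) = 0) :
    (∀ i, f (ξ i) = 0) ∧ (∀ i X, η i (f X) = 0) := by
  have hker {x : V} : f x = 0 → x = ∑ i, η i x • ξ i :=
    eq_sum_smul_of_apply_eq_zero hQ.injective hf2 hQξ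
  have hdimD := finrank_iInf_ker_add_card_of_biorthogonal hηξ
  rw [Fintype.card_fin] at hdimD
  have hrange : range f ≤ ⨅ i, ker (η i) := by
    refine range_le_of_map_le_of_disjoint_ker ?_ ?_ (by omega)
    · rintro _ ⟨x, hx, rfl⟩
      simp only [SetLike.mem_coe, Submodule.mem_iInf, mem_ker] at hx ⊢
      exact hD x hx
    · refine disjoint_ker.2 fun x hxD hx => ?_
      simp only [Submodule.mem_iInf, mem_ker] at hxD
      simpa [hxD] using hker hx
  have hηf : ∀ i X, η i (f X) = 0 := fun i X =>
    (Submodule.mem_iInf _).1 (hrange (mem_range_self f X)) i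
  refine ⟨fun j => ?_, hηf⟩
  have hf2ξ : f (f (ξ j)) = 0 := by
    rw [hf2, hQξ]
    simp [hηξ]
  simpa [hηf] using hker hf2ξ

/-- For a framed weak f-structure `(f, Q, ξ_i, η^i)` on a real vector space `V` of
dimension `2n+s`, one has `f ξ_i = 0` and `η^i ∘ f = 0` for every `i`. -/
theorem framed_weak_f_structure_f_xi_eq_zero_and_eta_comp_f_eq_zero
    {V : Type*} [AddCommGroup V] [Module ℝ V] [FiniteDimensional ℝ V]
    (n s : ℕ) (hn : 1 ≤ n) (hs : 1 ≤ s)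
    (hdim : Module.finrank ℝ V = 2 * n + s)
    (f Q : V →ₗ[ℝ] V) (ξ : Fin s → V) (η : Fin s → V →ₗ[ℝ] ℝ)
    (hQ : Function.Bijective Q)
    (hrank : Module.finrank ℝ (LinearMap.range f) = 2 * n)
    (hf2 : ∀ X, f (f X) = -(Q X) + ∑ i, η i X • ξ i)
    (hηξ : ∀ i j, η i (ξ j) = if i = j then (1 : ℝ) else 0)
    (hQξ : ∀ i, Q (ξ i) = ξ i)
    (hD : ∀ X, (∀ i, η i X = 0) → ∀ i, η i (f X) = 0) :
    (∀ i, f (ξ i) = 0) ∧ (∀ i X, η i (f X) = 0) :=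
  framed_weak_f_structure_f_xi_eq_zero_and_eta_comp_f_eq_zero_general n s hdim f Q ξ η hQ hrank hf2
    hηξ hQξ hD
end

section
/- For a framed weak f-structure (f, Q, ξ_1, …, ξ_s, η^1, …, η^s) on V one has η^i ∘ Q = η^i for every i = 1, …, s, and Q commutes with f, i.e. Q ∘ f = f ∘ Q. -/
/-! The `s` forms `η^i` cut out a subspace `D` of codimension at most `s`, so `dim D ≥ 2n = rank f`.
On `D` the relation `f² = -Q` shows that `f` is injective, hence (being `f`-invariant) `f(D) = D`,
so `D ⊆ im f` and the dimension count forces `im f = D`, i.e. `η^i ∘ f = 0`. Applying `η^i` to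
`f² = -Q + Σ η^i ⊗ ξ_i` gives `η^i ∘ Q = η^i`. Since `f² ξ_j = -ξ_j + ξ_j = 0` with `f ξ_j ∈ D`,
also `f ξ_j = 0`, and comparing `f ∘ f²` with `f² ∘ f` gives `Q ∘ f = f ∘ Q`. -/

open LinearMap Module

theorem LinearMap.mem_ker_pi_iff {R M ι : Type*} [Semiring R] [AddCommMonoid M] [Module R M]
    {η : ι → M →ₗ[R] R} {x : M} : x ∈ ker (pi η) ↔ ∀ i, η i x = 0 := by
  simp [funext_iff]

theorem LinearMap.finrank_le_finrank_ker_pi_add_card {K V ι : Type*} [DivisionRing K]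
    [AddCommGroup V] [Module K V] [FiniteDimensional K V] [Fintype ι] (η : ι → V →ₗ[K] K) :
    finrank K V ≤ finrank K (ker (pi η)) + Fintype.card ι := by
  have hrange : finrank K (range (pi η)) ≤ Fintype.card ι :=
    (Submodule.finrank_le _).trans (finrank_fintype_fun_eq_card K).le
  have := finrank_range_add_finrank_ker (pi η)
  omega

theorem Submodule.le_range_of_mapsTo_of_disjoint_ker {K V : Type*} [DivisionRing K]
    [AddCommGroup V] [Module K V] {f : V →ₗ[K] V} {D : Submodule K V} [FiniteDimensional K D]
    (hmaps : ∀ x ∈ D, f x ∈ D) (hinj : Disjoint D (ker f)) : D ≤ range f := by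
  have hinj' : Function.Injective (f.restrict hmaps) := by
    rw [← ker_eq_bot, ker_eq_bot']
    exact fun x hx => Subtype.ext (disjoint_ker.mp hinj x x.2 (congrArg Subtype.val hx))
  intro x hx
  obtain ⟨y, hy⟩ := injective_iff_surjective.mp hinj' ⟨x, hx⟩
  exact ⟨y, congrArg Subtype.val hy⟩

namespace FramedWeakFStructure

variable {K V ι : Type*} [Field K] [AddCommGroup V] [Module K V] [Fintype ι]
  {f Q : V →ₗ[K] V} {ξ : ι → V} {η : ι → V →ₗ[K] K}

theorem sum_eta_smul_xi [DecidableEq ι] (hηξ : ∀ i j, η i (ξ j) = if i = j then (1 : K) else 0)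
    (j : ι) : ∑ i, η i (ξ j) • ξ i = ξ j := by
  simp [hηξ, ite_smul]

theorem eta_sum_smul_xi [DecidableEq ι] (hηξ : ∀ i j, η i (ξ j) = if i = j then (1 : K) else 0)
    (c : ι → K) (i : ι) : η i (∑ j, c j • ξ j) = c i := by
  simp [hηξ]

theorem disjoint_ker_pi_ker (hQ : Function.Injective Q)
    (hf2 : ∀ X, f (f X) = -(Q X) + ∑ i, η i X • ξ i) : Disjoint (ker (pi η)) (ker f) := by
  refine disjoint_ker.mpr fun X hX hfX => hQ ?_
  have hηX := mem_ker_pi_iff.mp hX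
  have := hf2 X
  simp only [hfX, map_zero, hηX, zero_smul, Finset.sum_const_zero, add_zero, zero_eq_neg] at this
  rw [this, map_zero]

theorem ker_pi_eq_range [FiniteDimensional K V] (hQ : Function.Injective Q)
    (hf2 : ∀ X, f (f X) = -(Q X) + ∑ i, η i X • ξ i)
    (hD : ∀ X, (∀ i, η i X = 0) → ∀ i, η i (f X) = 0)
    (hdim : finrank K (range f) + Fintype.card ι ≤ finrank K V) : ker (pi η) = range f := by
  have hle : ker (pi η) ≤ range f :=
    Submodule.le_range_of_mapsTo_of_disjoint_ker
      (fun X hX => mem_ker_pi_iff.mpr (hD X (mem_ker_pi_iff.mp hX)))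
      (disjoint_ker_pi_ker hQ hf2)
  refine Submodule.eq_of_le_of_finrank_le hle ?_
  have := finrank_le_finrank_ker_pi_add_card η
  omega

theorem eta_apply_f [FiniteDimensional K V] (hQ : Function.Injective Q)
    (hf2 : ∀ X, f (f X) = -(Q X) + ∑ i, η i X • ξ i)
    (hD : ∀ X, (∀ i, η i X = 0) → ∀ i, η i (f X) = 0)
    (hdim : finrank K (range f) + Fintype.card ι ≤ finrank K V) (i : ι) (X : V) :
    η i (f X) = 0 := by
  have : f X ∈ ker (pi η) := ker_pi_eq_range hQ hf2 hD hdim ▸ mem_range_self f X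
  exact mem_ker_pi_iff.mp this i

theorem f_xi_eq_zero [FiniteDimensional K V] [DecidableEq ι] (hQ : Function.Injective Q)
    (hf2 : ∀ X, f (f X) = -(Q X) + ∑ i, η i X • ξ i)
    (hD : ∀ X, (∀ i, η i X = 0) → ∀ i, η i (f X) = 0)
    (hdim : finrank K (range f) + Fintype.card ι ≤ finrank K V)
    (hηξ : ∀ i j, η i (ξ j) = if i = j then (1 : K) else 0) (hQξ : ∀ i, Q (ξ i) = ξ i) (j : ι) :
    f (ξ j) = 0 :=
  disjoint_ker.mp (disjoint_ker_pi_ker hQ hf2) (f (ξ j))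
    (mem_ker_pi_iff.mpr fun i => eta_apply_f hQ hf2 hD hdim i (ξ j))
    (by rw [hf2, hQξ, sum_eta_smul_xi hηξ, neg_add_cancel])

theorem eta_apply_Q [FiniteDimensional K V] [DecidableEq ι] (hQ : Function.Injective Q)
    (hf2 : ∀ X, f (f X) = -(Q X) + ∑ i, η i X • ξ i)
    (hD : ∀ X, (∀ i, η i X = 0) → ∀ i, η i (f X) = 0)
    (hdim : finrank K (range f) + Fintype.card ι ≤ finrank K V)
    (hηξ : ∀ i j, η i (ξ j) = if i = j then (1 : K) else 0) (i : ι) (X : V) :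
    η i (Q X) = η i X := by
  have h := congrArg (η i) (hf2 X)
  rw [eta_apply_f hQ hf2 hD hdim, map_add, map_neg, eta_sum_smul_xi hηξ] at h
  linear_combination h

theorem Q_apply_f_comm [FiniteDimensional K V] [DecidableEq ι] (hQ : Function.Injective Q)
    (hf2 : ∀ X, f (f X) = -(Q X) + ∑ i, η i X • ξ i)
    (hD : ∀ X, (∀ i, η i X = 0) → ∀ i, η i (f X) = 0)
    (hdim : finrank K (range f) + Fintype.card ι ≤ finrank K V)
    (hηξ : ∀ i j, η i (ξ j) = if i = j then (1 : K) else 0) (hQξ : ∀ i, Q (ξ i) = ξ i) (X : V) :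
    Q (f X) = f (Q X) := by
  apply neg_injective
  calc -(Q (f X)) = f (f (f X)) := by simp [hf2 (f X), eta_apply_f hQ hf2 hD hdim]
    _ = -(f (Q X)) := by simp [hf2 X, f_xi_eq_zero hQ hf2 hD hdim hηξ hQξ]

end FramedWeakFStructure

theorem framed_weak_f_structure_eta_comp_Q_and_Q_comm_f_general
    {V : Type*} [AddCommGroup V] [Module ℝ V] [FiniteDimensional ℝ V]
    (n s : ℕ)
    (hdim : Module.finrank ℝ V = 2 * n + s)
    (f Q : V →ₗ[ℝ] V) (ξ : Fin s → V) (η : Fin s → V →ₗ[ℝ] ℝ)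
    (hQ : Function.Bijective Q)
    (hrank : Module.finrank ℝ (LinearMap.range f) = 2 * n)
    (hf2 : ∀ X, f (f X) = -(Q X) + ∑ i, η i X • ξ i)
    (hηξ : ∀ i j, η i (ξ j) = if i = j then (1 : ℝ) else 0)
    (hQξ : ∀ i, Q (ξ i) = ξ i)
    (hD : ∀ X, (∀ i, η i X = 0) → ∀ i, η i (f X) = 0) :
    (∀ i X, η i (Q X) = η i X) ∧ (∀ X, Q (f X) = f (Q X)) := by
  have hdim' : finrank ℝ (range f) + Fintype.card (Fin s) ≤ finrank ℝ V := by
    simp [hrank, hdim]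
  exact ⟨FramedWeakFStructure.eta_apply_Q hQ.injective hf2 hD hdim' hηξ,
    FramedWeakFStructure.Q_apply_f_comm hQ.injective hf2 hD hdim' hηξ hQξ⟩

/-- For a framed weak f-structure `(f, Q, ξ_i, η^i)` on a real vector space `V` of
dimension `2n+s`, one has `η^i ∘ Q = η^i` for every `i`, and `Q` commutes with `f`. -/
theorem framed_weak_f_structure_eta_comp_Q_and_Q_comm_f
    {V : Type*} [AddCommGroup V] [Module ℝ V] [FiniteDimensional ℝ V]
    (n s : ℕ) (hn : 1 ≤ n) (hs : 1 ≤ s)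
    (hdim : Module.finrank ℝ V = 2 * n + s)
    (f Q : V →ₗ[ℝ] V) (ξ : Fin s → V) (η : Fin s → V →ₗ[ℝ] ℝ)
    (hQ : Function.Bijective Q)
    (hrank : Module.finrank ℝ (LinearMap.range f) = 2 * n)
    (hf2 : ∀ X, f (f X) = -(Q X) + ∑ i, η i X • ξ i)
    (hηξ : ∀ i j, η i (ξ j) = if i = j then (1 : ℝ) else 0)
    (hQξ : ∀ i, Q (ξ i) = ξ i)
    (hD : ∀ X, (∀ i, η i X = 0) → ∀ i, η i (f X) = 0) :
    (∀ i X, η i (Q X) = η i X) ∧ (∀ X, Q (f X) = f (Q X)) :=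
  framed_weak_f_structure_eta_comp_Q_and_Q_comm_f_general n s hdim f Q ξ η hQ hrank hf2 hηξ hQξ hD
end

section
/- For a framed weak f-structure (f, Q, ξ_1, …, ξ_s, η^1, …, η^s) on V the identity f³ + f ∘ Q = 0 holds. -/
/-!
On `ker f` the structure equation reads `Q X = ∑ η^i(X) ξ_i = Q (∑ η^i(X) ξ_i)`, so `ker f` lies in the
span of the `ξ_i`; these are independent (the `η^i` are dual to them) and rank–nullity gives
`dim ker f = s`, hence `ker f = span ξ`. Then `f³ + f Q = f ∘ (f² + Q) = ∑ η^i ⊗ f ξ_i = 0`.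
-/

open Module Submodule LinearMap

section

variable {R V ι : Type*} [CommRing R] [AddCommGroup V] [Module R V]

theorem linearIndependent_of_apply_eq_ite [DecidableEq ι] {ξ : ι → V} {η : ι → V →ₗ[R] R}
    (hηξ : ∀ i j, η i (ξ j) = if i = j then (1 : R) else 0) : LinearIndependent R ξ := by
  refine LinearIndependent.of_comp (LinearMap.pi η) ?_
  have hpair : ⇑(LinearMap.pi η) ∘ ξ = fun j => Pi.single j 1 := by
    ext j i
    simp [hηξ, Pi.single_apply]
  rw [hpair]
  exact Pi.linearIndependent_single_one ι R

variable [Fintype ι]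

theorem eq_sum_of_mem_ker_of_comp_self_eq {f Q : V →ₗ[R] V} {ξ : ι → V} {η : ι → V →ₗ[R] R}
    (hQ : Function.Injective Q) (hf2 : ∀ X, f (f X) = -(Q X) + ∑ i, η i X • ξ i)
    (hQξ : ∀ i, Q (ξ i) = ξ i) {X : V} (hX : X ∈ ker f) : X = ∑ i, η i X • ξ i := by
  apply hQ
  have hQX : Q X = ∑ i, η i X • ξ i :=
    neg_add_eq_zero.mp (by simpa [mem_ker.mp hX] using (hf2 X).symm)
  simp only [hQX, map_sum, map_smul, hQξ]

theorem ker_le_span_of_comp_self_eq {f Q : V →ₗ[R] V} {ξ : ι → V} {η : ι → V →ₗ[R] R}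
    (hQ : Function.Injective Q) (hf2 : ∀ X, f (f X) = -(Q X) + ∑ i, η i X • ξ i)
    (hQξ : ∀ i, Q (ξ i) = ξ i) : ker f ≤ span R (Set.range ξ) := fun _ hX =>
  (mem_span_range_iff_exists_fun R).mpr ⟨_, (eq_sum_of_mem_ker_of_comp_self_eq hQ hf2 hQξ hX).symm⟩

end

theorem LinearMap.ker_eq_span_of_le_of_finrank_eq {K V W ι : Type*} [Field K] [AddCommGroup V]
    [Module K V] [FiniteDimensional K V] [AddCommGroup W] [Module K W] [Fintype ι]
    {f : V →ₗ[K] W} {ξ : ι → V} (hξ : LinearIndependent K ξ) (hle : ker f ≤ span K (Set.range ξ))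
    (hdim : finrank K (range f) + Fintype.card ι = finrank K V) : ker f = span K (Set.range ξ) := by
  refine Submodule.eq_of_le_of_finrank_le hle ?_
  have := finrank_range_add_finrank_ker f
  rw [finrank_span_eq_card hξ]
  omega

theorem framed_weak_f_structure_f_cubed_add_f_comp_Q_eq_zero_general
    {V : Type*} [AddCommGroup V] [Module ℝ V] [FiniteDimensional ℝ V]
    (n s : ℕ)
    (hdim : Module.finrank ℝ V = 2 * n + s)
    (f Q : V →ₗ[ℝ] V) (ξ : Fin s → V) (η : Fin s → V →ₗ[ℝ] ℝ)
    (hQ : Function.Bijective Q)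
    (hrank : Module.finrank ℝ (LinearMap.range f) = 2 * n)
    (hf2 : ∀ X, f (f X) = -(Q X) + ∑ i, η i X • ξ i)
    (hηξ : ∀ i j, η i (ξ j) = if i = j then (1 : ℝ) else 0)
    (hQξ : ∀ i, Q (ξ i) = ξ i) :
    ∀ X, f (f (f X)) + f (Q X) = 0 := by
  have hker : ker f = span ℝ (Set.range ξ) :=
    LinearMap.ker_eq_span_of_le_of_finrank_eq (linearIndependent_of_apply_eq_ite hηξ)
      (ker_le_span_of_comp_self_eq hQ.injective hf2 hQξ) (by rw [hrank, Fintype.card_fin, hdim])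
  have hfξ : ∀ i, f (ξ i) = 0 := fun i =>
    mem_ker.mp (hker ▸ subset_span (Set.mem_range_self i))
  intro X
  rw [hf2 X]
  simp [hfξ]

/-- For a framed weak f-structure `(f, Q, ξ_i, η^i)` on a real vector space `V` of
dimension `2n+s`, the identity `f³ + f ∘ Q = 0` holds. -/
theorem framed_weak_f_structure_f_cubed_add_f_comp_Q_eq_zero
    {V : Type*} [AddCommGroup V] [Module ℝ V] [FiniteDimensional ℝ V]
    (n s : ℕ) (hn : 1 ≤ n) (hs : 1 ≤ s)
    (hdim : Module.finrank ℝ V = 2 * n + s)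
    (f Q : V →ₗ[ℝ] V) (ξ : Fin s → V) (η : Fin s → V →ₗ[ℝ] ℝ)
    (hQ : Function.Bijective Q)
    (hrank : Module.finrank ℝ (LinearMap.range f) = 2 * n)
    (hf2 : ∀ X, f (f X) = -(Q X) + ∑ i, η i X • ξ i)
    (hηξ : ∀ i j, η i (ξ j) = if i = j then (1 : ℝ) else 0)
    (hQξ : ∀ i, Q (ξ i) = ξ i)
    (hD : ∀ X, (∀ i, η i X = 0) → ∀ i, η i (f X) = 0) :
    ∀ X, f (f (f X)) + f (Q X) = 0 :=
  framed_weak_f_structure_f_cubed_add_f_comp_Q_eq_zero_general n s hdim f Q ξ η hQ hrank hf2 hηξ hQξ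
end

section
/- For a framed weak f-structure (f, Q, ξ_1, …, ξ_s, η^1, …, η^s) on V: the kernel of f equals the linear span of ξ_1, …, ξ_s, the image of f equals D = ∩_i ker η^i, and the restriction of f to D is injective. -/
/-!
Write `P X = ∑ i, η i X • ξ i` for the vertical projection. Biorthogonality makes
`V = span ξ ⊕ D`. On `ker f` the structure equation reads `Q X = P X = Q (P X)`, so
`ker f ≤ span ξ`, and the rank hypothesis forces equality. Then `f` kills the vertical part,
so `range f = f D ≤ D`, with equality by counting dimensions; since `ker f ∩ D = 0`,
`f` is injective on `D`.
-/

open Module Submodule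

namespace FramedWeakFStructure

variable {K V ι : Type*} [Field K] [AddCommGroup V] [Module K V] [Fintype ι]
  {ξ : ι → V} {η : ι → V →ₗ[K] K}

theorem ker_le_span_range {f Q : V →ₗ[K] V} (hQ : Function.Injective Q)
    (hf2 : ∀ X, f (f X) = -(Q X) + ∑ i, η i X • ξ i) (hQξ : ∀ i, Q (ξ i) = ξ i) :
    LinearMap.ker f ≤ span K (Set.range ξ) := by
  intro x hx
  have hQx : Q x = ∑ i, η i x • ξ i := by
    have h := hf2 x
    rw [LinearMap.mem_ker.mp hx, map_zero] at h
    linear_combination (norm := module) h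
  have hx_eq : x = ∑ i, η i x • ξ i := hQ <| by simp [hQx, hQξ]
  rw [hx_eq]
  exact sum_smul_mem _ _ fun i _ => subset_span ⟨i, rfl⟩

variable [DecidableEq ι]

theorem apply_sum_smul (hηξ : ∀ i j, η i (ξ j) = if i = j then (1 : K) else 0)
    (c : ι → K) (j : ι) : η j (∑ i, c i • ξ i) = c j := by
  simp [hηξ]

theorem sub_sum_smul_mem_iInf_ker (hηξ : ∀ i j, η i (ξ j) = if i = j then (1 : K) else 0)
    (x : V) : x - ∑ i, η i x • ξ i ∈ ⨅ i, LinearMap.ker (η i) := by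
  simp only [mem_iInf, LinearMap.mem_ker, map_sub, apply_sum_smul hηξ, sub_self,
    implies_true]

theorem isCompl_span_range_iInf_ker (hηξ : ∀ i j, η i (ξ j) = if i = j then (1 : K) else 0) :
    IsCompl (span K (Set.range ξ)) (⨅ i, LinearMap.ker (η i)) := by
  constructor
  · rw [disjoint_def]
    intro x hxξ hxD
    obtain ⟨c, rfl⟩ := (mem_span_range_iff_exists_fun K).mp hxξ
    have hc : ∀ j, c j = 0 := fun j => by
      simpa only [LinearMap.mem_ker, apply_sum_smul hηξ] using mem_iInf _ |>.mp hxD j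
    simp [hc]
  · rw [codisjoint_iff, eq_top_iff]
    intro x _
    rw [← add_sub_cancel (∑ i, η i x • ξ i) x]
    exact add_mem_sup (sum_smul_mem _ _ fun i _ => subset_span ⟨i, rfl⟩)
      (sub_sum_smul_mem_iInf_ker hηξ x)

end FramedWeakFStructure

namespace LinearMap

variable {K V : Type*} [Field K] [AddCommGroup V] [Module K V]

theorem range_le_of_codisjoint_ker {f : V →ₗ[K] V} {D : Submodule K V}
    (hcod : Codisjoint (ker f) D) (hD : ∀ x ∈ D, f x ∈ D) : range f ≤ D := by
  rintro _ ⟨x, rfl⟩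
  obtain ⟨k, hk, d, hd, rfl⟩ := mem_sup.mp (hcod.eq_top ▸ mem_top : x ∈ ker f ⊔ D)
  rw [map_add, mem_ker.mp hk, zero_add]
  exact hD d hd

theorem range_eq_of_isCompl_ker [FiniteDimensional K V] {f : V →ₗ[K] V} {D : Submodule K V}
    (hcompl : IsCompl (ker f) D) (hD : ∀ x ∈ D, f x ∈ D) : range f = D := by
  refine eq_of_le_of_finrank_le (range_le_of_codisjoint_ker hcompl.codisjoint hD) ?_
  have := finrank_range_add_finrank_ker f
  have := finrank_add_eq_of_isCompl hcompl
  omega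

end LinearMap

theorem framed_weak_f_structure_ker_range_injOn_general
    {V : Type*} [AddCommGroup V] [Module ℝ V] [FiniteDimensional ℝ V]
    (n s : ℕ)
    (hdim : Module.finrank ℝ V = 2 * n + s)
    (f Q : V →ₗ[ℝ] V) (ξ : Fin s → V) (η : Fin s → V →ₗ[ℝ] ℝ)
    (hQ : Function.Bijective Q)
    (hrank : Module.finrank ℝ (LinearMap.range f) = 2 * n)
    (hf2 : ∀ X, f (f X) = -(Q X) + ∑ i, η i X • ξ i)
    (hηξ : ∀ i j, η i (ξ j) = if i = j then (1 : ℝ) else 0)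
    (hQξ : ∀ i, Q (ξ i) = ξ i)
    (hD : ∀ X, (∀ i, η i X = 0) → ∀ i, η i (f X) = 0) :
    LinearMap.ker f = Submodule.span ℝ (Set.range ξ) ∧
    LinearMap.range f = (⨅ i, LinearMap.ker (η i)) ∧
    (∀ X ∈ (⨅ i, LinearMap.ker (η i) : Submodule ℝ V),
      ∀ Y ∈ (⨅ i, LinearMap.ker (η i) : Submodule ℝ V), f X = f Y → X = Y) := by
  have hker : LinearMap.ker f = span ℝ (Set.range ξ) := by
    refine eq_of_le_of_finrank_le
      (FramedWeakFStructure.ker_le_span_range hQ.injective hf2 hQξ) ?_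
    have := LinearMap.finrank_range_add_finrank_ker f
    have := finrank_range_le_card (R := ℝ) ξ
    simp only [Fintype.card_fin, Set.finrank] at this
    omega
  have hcompl := hker ▸ FramedWeakFStructure.isCompl_span_range_iInf_ker hηξ
  have hfD : ∀ x ∈ (⨅ i, LinearMap.ker (η i)), f x ∈ ⨅ i, LinearMap.ker (η i) := by
    simpa only [mem_iInf, LinearMap.mem_ker] using hD
  exact ⟨hker, LinearMap.range_eq_of_isCompl_ker hcompl hfD,
    LinearMap.injOn_of_disjoint_ker le_rfl hcompl.disjoint.symm⟩

/-- For a framed weak f-structure `(f, Q, ξ_i, η^i)` on a real vector space `V` of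
dimension `2n+s`: `ker f = span{ξ_1, …, ξ_s}`, `range f = D := ⋂_i ker η^i`,
and `f` restricted to `D` is injective. -/
theorem framed_weak_f_structure_ker_range_injOn
    {V : Type*} [AddCommGroup V] [Module ℝ V] [FiniteDimensional ℝ V]
    (n s : ℕ) (hn : 1 ≤ n) (hs : 1 ≤ s)
    (hdim : Module.finrank ℝ V = 2 * n + s)
    (f Q : V →ₗ[ℝ] V) (ξ : Fin s → V) (η : Fin s → V →ₗ[ℝ] ℝ)
    (hQ : Function.Bijective Q)
    (hrank : Module.finrank ℝ (LinearMap.range f) = 2 * n)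
    (hf2 : ∀ X, f (f X) = -(Q X) + ∑ i, η i X • ξ i)
    (hηξ : ∀ i j, η i (ξ j) = if i = j then (1 : ℝ) else 0)
    (hQξ : ∀ i, Q (ξ i) = ξ i)
    (hD : ∀ X, (∀ i, η i X = 0) → ∀ i, η i (f X) = 0) :
    LinearMap.ker f = Submodule.span ℝ (Set.range ξ) ∧
    LinearMap.range f = (⨅ i, LinearMap.ker (η i)) ∧
    (∀ X ∈ (⨅ i, LinearMap.ker (η i) : Submodule ℝ V),
      ∀ Y ∈ (⨅ i, LinearMap.ker (η i) : Submodule ℝ V), f X = f Y → X = Y) :=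
  framed_weak_f_structure_ker_range_injOn_general n s hdim f Q ξ η hQ hrank hf2 hηξ hQξ hD
end

section
/- Let V be a finite-dimensional real inner product space, h a self-adjoint endomorphism of V, and f an endomorphism of V with h ∘ f = −f ∘ h and ker f ⊆ ker h. Then the trace of h is zero. -/
open scoped RealInnerProductSpace

/-!
Since `h` is self-adjoint, `ker h` meets `range h` trivially. The anticommutation relation makes
`f` preserve `W = range h`, and `ker f ≤ ker h` then makes `f` injective, hence invertible, on `W`.
So `h|_W` is conjugate to `-h|_W` and has zero trace; as `h` takes values in `W`, `tr h = tr h|_W`.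
-/

namespace LinearMap

theorem trace_eq_zero_of_anticommute_linearEquiv {R M : Type*} [CommRing R] [IsAddTorsionFree R]
    [AddCommGroup M] [Module R M] (h : M →ₗ[R] M) (e : M ≃ₗ[R] M)
    (hanti : ∀ x, h (e x) = -e (h x)) :
    trace R M h = 0 := by
  have hconj : e.conj h = -h := by
    ext x
    have hx := hanti (e.symm x)
    rw [e.apply_symm_apply] at hx
    simp [hx]
  rw [← self_eq_neg, ← map_neg, ← hconj, trace_conj']

theorem trace_eq_zero_of_anticommute_of_ker_le {K V : Type*} [Field K] [CharZero K]
    [AddCommGroup V] [Module K V] [FiniteDimensional K V] (h f : V →ₗ[K] V)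
    (hanti : ∀ x, h (f x) = -f (h x)) (hker : ker f ≤ ker h) (hdisj : Disjoint (ker h) (range h)) :
    trace K V h = 0 := by
  have hfW : ∀ x ∈ range h, f x ∈ range h := by
    rintro _ ⟨y, rfl⟩
    exact ⟨-f y, by rw [map_neg, hanti, neg_neg]⟩
  have hinj : Function.Injective (f.restrict hfW) := by
    rw [← ker_eq_bot, eq_bot_iff]
    rintro ⟨w, hw⟩ hfw
    have hw0 : w ∈ ker h ⊓ range h := ⟨hker (congrArg Subtype.val hfw), hw⟩
    simpa [hdisj.eq_bot] using hw0
  rw [← trace_restrict_eq_of_forall_mem (range h) h (mem_range_self h)]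
  exact trace_eq_zero_of_anticommute_linearEquiv _ (LinearEquiv.ofInjectiveEndo _ hinj)
    fun x ↦ Subtype.ext (hanti x)

theorem IsSymmetric.disjoint_ker_range {𝕜 E : Type*} [RCLike 𝕜] [NormedAddCommGroup E]
    [InnerProductSpace 𝕜 E] {T : E →ₗ[𝕜] E} (hT : T.IsSymmetric) :
    Disjoint (ker T) (range T) := by
  rw [disjoint_iff_inf_le]
  rintro _ ⟨hx, y, rfl⟩
  rw [SetLike.mem_coe, mem_ker] at hx
  rw [Submodule.mem_bot, ← inner_self_eq_zero (𝕜 := 𝕜), hT, hx, inner_zero_right]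

end LinearMap

/-- Let `V` be a finite-dimensional real inner product space, `h` self-adjoint,
`f` an endomorphism with `h ∘ f = -f ∘ h` and `ker f ⊆ ker h`. Then `tr h = 0`. -/
theorem self_adjoint_anticommuting_trace_eq_zero
    {V : Type*} [NormedAddCommGroup V] [InnerProductSpace ℝ V] [FiniteDimensional ℝ V]
    (h f : V →ₗ[ℝ] V)
    (hsa : ∀ X Y, ⟪h X, Y⟫ = ⟪X, h Y⟫)
    (hanti : ∀ X, h (f X) = -(f (h X)))
    (hker : LinearMap.ker f ≤ LinearMap.ker h) :
    LinearMap.trace ℝ V h = 0 :=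
  LinearMap.trace_eq_zero_of_anticommute_of_ker_le h f hanti hker
    (LinearMap.IsSymmetric.disjoint_ker_range hsa)
end

section
/- With the above hypotheses, the endomorphism Q⁻¹h is self-adjoint, (Q⁻¹h)²X = X for all X ∈ D, and V decomposes as the orthogonal direct sum V = ker f ⊕ D⁺ ⊕ D⁻, where D⁺ and D⁻ are the eigenspaces of Q⁻¹h for the eigenvalues +1 and −1 respectively; moreover f(D⁺) ⊆ D⁻, f(D⁻) ⊆ D⁺, and dim D⁺ = dim D⁻ = n. -/
/-! Comparing `⟪fX, fY⟫` with `⟪fY, fX⟫` shows that `Q` is self-adjoint; since `h` commutes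
with `Q`, so does `A = Q⁻¹h`, which is therefore self-adjoint, and `h² = Q²` on `D` gives
`A² = 1` there. A rank count gives `ker f = span ξ`, and the metric identity at `Y = ξ_i` gives
`ηⁱ = ⟪·, ξ_i⟫`, so `D = (ker f)ᗮ`. A self-adjoint operator killing `ker f` has its
`±1`-eigenspaces inside `(ker f)ᗮ = D`, and they span `D` because `A² = 1` there. Finally
`Af = -fA`, so `f`, which is injective on `D`, exchanges the two eigenspaces; they have equal
dimension, half of `dim D = rank f = 2n`. -/

open scoped RealInnerProductSpace

open Module LinearMap Submodule Module.End

section CompEq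

variable {R M : Type*} [Ring R] [AddCommGroup M] [Module R M] {Q A h : M →ₗ[R] M}

lemma apply_comm_of_comp_eq (hQ : Function.Injective Q) (hA : ∀ X, Q (A X) = h X)
    (hhQ : ∀ X, h (Q X) = Q (h X)) (X : M) : A (Q X) = Q (A X) :=
  hQ <| by rw [hA, hhQ, hA]

lemma apply_apply_eq_of_comp_eq (hQ : Function.Injective Q) (hA : ∀ X, Q (A X) = h X)
    (hhQ : ∀ X, h (Q X) = Q (h X)) {X : M} (hX : h (h X) = Q (Q X)) : A (A X) = X :=
  hQ <| hQ <| by rw [hA, ← hhQ, hA, hX]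

lemma apply_anticomm_of_comp_eq {f : M →ₗ[R] M} (hQ : Function.Injective Q)
    (hA : ∀ X, Q (A X) = h X) (hhf : ∀ X, h (f X) = -f (h X)) (hfQ : ∀ X, f (Q X) = Q (f X))
    (X : M) : A (f X) = -f (A X) :=
  hQ <| by rw [hA, hhf, ← hA, hfQ, map_neg]

end CompEq

section Symmetric

variable {E : Type*} [NormedAddCommGroup E] [InnerProductSpace ℝ E] {Q A h : E →ₗ[ℝ] E}

lemma isSymmetric_of_comp_eq (hQ : Function.Bijective Q) (hQs : Q.IsSymmetric)
    (hhs : h.IsSymmetric) (hA : ∀ X, Q (A X) = h X) (hAQ : ∀ X, A (Q X) = Q (A X)) :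
    A.IsSymmetric := by
  intro X Y
  obtain ⟨Z, rfl⟩ := hQ.2 Y
  rw [← hQs, hA, hhs, hAQ, hA]

end Symmetric

section FStructure

variable {V ι : Type*} [NormedAddCommGroup V] [InnerProductSpace ℝ V] [Fintype ι]
  {f Q : V →ₗ[ℝ] V} {ξ : ι → V} {η : ι → V →ₗ[ℝ] ℝ}

lemma isSymmetric_of_inner_map_map
    (hmetric : ∀ X Y, ⟪f X, f Y⟫ = ⟪X, Q Y⟫ - ∑ i, η i X * η i Y) : Q.IsSymmetric := by
  intro X Y
  have hsum : ∑ i, η i Y * η i X = ∑ i, η i X * η i Y := by simp only [mul_comm]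
  linarith [hmetric X Y, hmetric Y X, real_inner_comm (f X) (f Y), real_inner_comm (Q X) Y]

lemma eq_sum_of_map_eq_zero (hQ : Function.Injective Q)
    (hf2 : ∀ X, f (f X) = -Q X + ∑ i, η i X • ξ i) (hQξ : ∀ i, Q (ξ i) = ξ i) {X : V}
    (hX : f X = 0) : X = ∑ i, η i X • ξ i :=
  hQ <| by
    have := hf2 X
    rw [hX, map_zero, eq_comm, neg_add_eq_zero] at this
    simp [this, map_sum, hQξ]

lemma apply_comm_of_sq_eq (hf2 : ∀ X, f (f X) = -Q X + ∑ i, η i X • ξ i)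
    (hfξ : ∀ i, f (ξ i) = 0) (hηf : ∀ X i, η i (f X) = 0) (X : V) : f (Q X) = Q (f X) := by
  have h3 : f (f (f X)) = -f (Q X) := by simp [hf2, hfξ]
  rw [hf2 (f X)] at h3
  simpa [hηf] using h3.symm

variable [DecidableEq ι]

lemma ker_eq_span_range [FiniteDimensional ℝ V] (hQ : Function.Injective Q)
    (hf2 : ∀ X, f (f X) = -Q X + ∑ i, η i X • ξ i) (hQξ : ∀ i, Q (ξ i) = ξ i)
    (hηξ : ∀ i j, η i (ξ j) = if i = j then (1 : ℝ) else 0)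
    (hdim : finrank ℝ V = finrank ℝ (range f) + Fintype.card ι) :
    ker f = span ℝ (Set.range ξ) := by
  have hle : ker f ≤ span ℝ (Set.range ξ) := fun X hX => by
    rw [eq_sum_of_map_eq_zero hQ hf2 hQξ hX]
    exact sum_mem fun i _ => smul_mem _ _ (subset_span ⟨i, rfl⟩)
  have hli : LinearIndependent ℝ ξ :=
    .of_pairwise_dual_eq_zero_one ξ η (fun i j hij => by simp [hηξ, hij]) (by simp [hηξ])
  refine eq_of_le_of_finrank_le hle ?_
  have := finrank_range_add_finrank_ker f
  rw [finrank_span_eq_card hli]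
  omega

lemma eta_eq_inner (hmetric : ∀ X Y, ⟪f X, f Y⟫ = ⟪X, Q Y⟫ - ∑ i, η i X * η i Y)
    (hηξ : ∀ i j, η i (ξ j) = if i = j then (1 : ℝ) else 0) (hQξ : ∀ i, Q (ξ i) = ξ i)
    {i : ι} (hfξ : f (ξ i) = 0) (X : V) : η i X = ⟪X, ξ i⟫ := by
  have := hmetric X (ξ i)
  simp [hfξ, hQξ, hηξ] at this
  linarith

lemma eta_map_eq_zero (hηξ : ∀ i j, η i (ξ j) = if i = j then (1 : ℝ) else 0)
    (hDf : ∀ X, (∀ i, η i X = 0) → ∀ i, η i (f X) = 0) (hfξ : ∀ i, f (ξ i) = 0) (X : V)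
    (i : ι) : η i (f X) = 0 := by
  have hD : ∀ i, η i (X - ∑ j, η j X • ξ j) = 0 := fun i => by simp [hηξ]
  simpa [hfξ] using hDf _ hD i

end FStructure

lemma orthogonal_span_range_eq_iInf_ker {V ι : Type*} [NormedAddCommGroup V]
    [InnerProductSpace ℝ V] {ξ : ι → V} {η : ι → V →ₗ[ℝ] ℝ} (hη : ∀ i X, η i X = ⟪X, ξ i⟫) :
    (span ℝ (Set.range ξ))ᗮ = ⨅ i, ker (η i) := by
  ext X
  rw [mem_orthogonal', mem_iInf]
  change span ℝ _ ≤ ker (innerₛₗ ℝ X) ↔ _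
  simp [span_le, Set.range_subset_iff, hη]

section Eigenspace

variable {K M : Type*} [Field K] [AddCommGroup M] [Module K M] {A : M →ₗ[K] M}

lemma ker_sub_id_eq_eigenspace_one : ker (A - LinearMap.id) = eigenspace A 1 := by
  ext X
  simp [sub_eq_zero]

lemma ker_add_id_eq_eigenspace_neg_one : ker (A + LinearMap.id) = eigenspace A (-1) := by
  ext X
  simp [add_eq_zero_iff_eq_neg]

lemma mem_eigenspace_one_sup_eigenspace_neg_one [NeZero (2 : K)] {X : M} (hX : A (A X) = X) :
    X ∈ eigenspace A 1 ⊔ eigenspace A (-1) := by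
  have hX' : X = (2⁻¹ : K) • (X + A X) + (2⁻¹ : K) • (X - A X) := by
    rw [← smul_add, add_add_sub_cancel, ← two_smul K, smul_smul, inv_mul_cancel₀ two_ne_zero,
      one_smul]
  rw [hX']
  refine add_mem_sup (smul_mem _ _ ?_) (smul_mem _ _ ?_) <;>
    simp [hX, add_comm]

lemma map_mem_eigenspace_neg_of_anticomm {f : M →ₗ[K] M} (hAf : ∀ X, A (f X) = -f (A X))
    {μ : K} {X : M} (hX : X ∈ eigenspace A μ) : f X ∈ eigenspace A (-μ) := by
  rw [mem_eigenspace_iff] at hX ⊢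
  rw [hAf, hX, map_smul, neg_smul]

lemma finrank_eigenspace_le_of_anticomm [FiniteDimensional K M] {f : M →ₗ[K] M}
    (hAf : ∀ X, A (f X) = -f (A X)) {μ : K} (hf : Disjoint (ker f) (eigenspace A μ)) :
    finrank K (eigenspace A μ) ≤ finrank K (eigenspace A (-μ)) := by
  refine LinearMap.finrank_le_finrank_of_injective
    (f := f.restrict fun _ => map_mem_eigenspace_neg_of_anticomm hAf) fun X Y hXY => ?_
  have : X.1 - Y.1 ∈ ker f := by
    simpa [sub_eq_zero, Subtype.ext_iff] using hXY
  exact Subtype.ext <| sub_eq_zero.mp <| (disjoint_def.mp hf) _ this (sub_mem X.2 Y.2)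

lemma finrank_eigenspace_neg_eq_of_anticomm [FiniteDimensional K M] {f : M →ₗ[K] M}
    (hAf : ∀ X, A (f X) = -f (A X)) {μ : K}
    (hf : Disjoint (ker f) (eigenspace A μ ⊔ eigenspace A (-μ))) :
    finrank K (eigenspace A (-μ)) = finrank K (eigenspace A μ) := by
  have hle := finrank_eigenspace_le_of_anticomm hAf (hf.mono_right le_sup_left)
  have hge := finrank_eigenspace_le_of_anticomm (μ := -μ) hAf (hf.mono_right le_sup_right)
  rw [neg_neg] at hge
  omega

end Eigenspace

section SymmetricEigenspace

variable {E : Type*} [NormedAddCommGroup E] [InnerProductSpace ℝ E] {A : E →ₗ[ℝ] E}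

lemma eigenspace_le_orthogonal_ker (hA : A.IsSymmetric) {μ : ℝ} (hμ : μ ≠ 0) :
    eigenspace A μ ≤ (ker A)ᗮ := by
  intro X hX
  rw [mem_orthogonal']
  intro Y hY
  rw [mem_eigenspace_iff] at hX
  have : μ * ⟪X, Y⟫ = 0 := by
    rw [← real_inner_smul_left, ← hX, hA, mem_ker.mp hY, inner_zero_right]
  simpa [hμ] using this

lemma eigenspace_one_sup_eigenspace_neg_one_eq_orthogonal (hA : A.IsSymmetric)
    {W : Submodule ℝ E} (hW : W ≤ ker A) (hA2 : ∀ X ∈ Wᗮ, A (A X) = X) :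
    eigenspace A 1 ⊔ eigenspace A (-1) = Wᗮ := by
  refine le_antisymm (sup_le ?_ ?_)
    fun X hX => mem_eigenspace_one_sup_eigenspace_neg_one (hA2 X hX)
  all_goals exact (eigenspace_le_orthogonal_ker hA (by norm_num)).trans (orthogonal_le hW)

lemma finrank_eigenspace_one_add_finrank_eigenspace_neg_one [FiniteDimensional ℝ E]
    (hA : A.IsSymmetric) :
    finrank ℝ (eigenspace A 1) + finrank ℝ (eigenspace A (-1))
      = finrank ℝ ↥(eigenspace A 1 ⊔ eigenspace A (-1)) := by
  have hdisj := (hA.orthogonalFamily_eigenspaces.isOrtho (by norm_num : (1 : ℝ) ≠ -1)).disjoint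
  have := finrank_sup_add_finrank_inf_eq (eigenspace A 1) (eigenspace A (-1))
  rw [disjoint_iff.mp hdisj, finrank_bot] at this
  omega

end SymmetricEigenspace

lemma finrank_orthogonal_ker {E F : Type*} [NormedAddCommGroup E] [InnerProductSpace ℝ E]
    [FiniteDimensional ℝ E] [AddCommGroup F] [Module ℝ F] (f : E →ₗ[ℝ] F) :
    finrank ℝ (ker f)ᗮ = finrank ℝ (range f) := by
  have := finrank_add_finrank_orthogonal (ker f)
  have := finrank_range_add_finrank_ker f
  omega

theorem weak_almost_S_nullity_eigenspace_decomposition_general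
    {V : Type*} [NormedAddCommGroup V] [InnerProductSpace ℝ V] [FiniteDimensional ℝ V]
    (n s : ℕ)
    (hdim : Module.finrank ℝ V = 2 * n + s)
    (f Q : V →ₗ[ℝ] V) (ξ : Fin s → V) (η : Fin s → V →ₗ[ℝ] ℝ)
    (hQ : Function.Bijective Q)
    (hrank : Module.finrank ℝ (LinearMap.range f) = 2 * n)
    (hf2 : ∀ X, f (f X) = -(Q X) + ∑ i, η i X • ξ i)
    (hηξ : ∀ i j, η i (ξ j) = if i = j then (1 : ℝ) else 0)
    (hQξ : ∀ i, Q (ξ i) = ξ i)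
    (hDf : ∀ X, (∀ i, η i X = 0) → ∀ i, η i (f X) = 0)
    (hmetric : ∀ X Y, ⟪f X, f Y⟫ = ⟪X, Q Y⟫ - ∑ i, η i X * η i Y)
    (h : V →ₗ[ℝ] V)
    (hhsa : ∀ X Y, ⟪h X, Y⟫ = ⟪X, h Y⟫)
    (hhξ : ∀ i, h (ξ i) = 0)
    (hhQ : ∀ X, h (Q X) = Q (h X))
    (hhf : ∀ X, h (f X) = -(f (h X)))
    (hh2 : ∀ X ∈ (⨅ i, LinearMap.ker (η i) : Submodule ℝ V), h (h X) = Q (Q X))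
    (A : V →ₗ[ℝ] V) (hA : Q ∘ₗ A = h) :
    (∀ X Y, ⟪A X, Y⟫ = ⟪X, A Y⟫) ∧
    (∀ X ∈ (⨅ i, LinearMap.ker (η i) : Submodule ℝ V), A (A X) = X) ∧
    (LinearMap.ker f ⊔ LinearMap.ker (A - LinearMap.id) ⊔ LinearMap.ker (A + LinearMap.id) = ⊤) ∧
    (∀ X ∈ LinearMap.ker f, ∀ Y ∈ LinearMap.ker (A - LinearMap.id), ⟪X, Y⟫ = 0) ∧
    (∀ X ∈ LinearMap.ker f, ∀ Y ∈ LinearMap.ker (A + LinearMap.id), ⟪X, Y⟫ = 0) ∧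
    (∀ X ∈ LinearMap.ker (A - LinearMap.id), ∀ Y ∈ LinearMap.ker (A + LinearMap.id),
      ⟪X, Y⟫ = 0) ∧
    (∀ X ∈ LinearMap.ker (A - LinearMap.id), f X ∈ LinearMap.ker (A + LinearMap.id)) ∧
    (∀ X ∈ LinearMap.ker (A + LinearMap.id), f X ∈ LinearMap.ker (A - LinearMap.id)) ∧
    Module.finrank ℝ (LinearMap.ker (A - LinearMap.id)) = n ∧
    Module.finrank ℝ (LinearMap.ker (A + LinearMap.id)) = n := by
  have hAh : ∀ X, Q (A X) = h X := LinearMap.congr_fun hA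
  have hker : ker f = span ℝ (Set.range ξ) :=
    ker_eq_span_range hQ.1 hf2 hQξ hηξ (by rw [hdim, hrank, Fintype.card_fin])
  have hfξ : ∀ i, f (ξ i) = 0 := fun i => mem_ker.mp (hker ▸ subset_span ⟨i, rfl⟩)
  have hD : (⨅ i, ker (η i)) = (ker f)ᗮ := by
    rw [hker, orthogonal_span_range_eq_iInf_ker fun i => eta_eq_inner hmetric hηξ hQξ (hfξ i)]
  have hAs : A.IsSymmetric := isSymmetric_of_comp_eq hQ (isSymmetric_of_inner_map_map hmetric)
    hhsa hAh (apply_comm_of_comp_eq hQ.1 hAh hhQ)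
  have hA2 : ∀ X ∈ (⨅ i, ker (η i)), A (A X) = X :=
    fun X hX => apply_apply_eq_of_comp_eq hQ.1 hAh hhQ (hh2 X hX)
  have hAf : ∀ X, A (f X) = -f (A X) := apply_anticomm_of_comp_eq hQ.1 hAh hhf
    (apply_comm_of_sq_eq hf2 hfξ (eta_map_eq_zero hηξ hDf hfξ))
  have hkerA : ker f ≤ ker A := hker ▸ span_le.mpr (Set.range_subset_iff.mpr
    fun i => mem_ker.mpr (hQ.1 (by rw [hAh, hhξ, map_zero])))
  have hsup := eigenspace_one_sup_eigenspace_neg_one_eq_orthogonal hAs hkerA (hD ▸ hA2)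
  have hPle : eigenspace A 1 ≤ (ker f)ᗮ := hsup ▸ le_sup_left
  have hMle : eigenspace A (-1) ≤ (ker f)ᗮ := hsup ▸ le_sup_right
  have hsum := finrank_eigenspace_one_add_finrank_eigenspace_neg_one hAs
  rw [hsup, finrank_orthogonal_ker, hrank] at hsum
  have hMP := finrank_eigenspace_neg_eq_of_anticomm (μ := 1) hAf
    (hsup ▸ orthogonal_disjoint (ker f))
  rw [ker_sub_id_eq_eigenspace_one, ker_add_id_eq_eigenspace_neg_one]
  refine ⟨hAs, hA2, by rw [sup_assoc, hsup, sup_orthogonal_of_hasOrthogonalProjection],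
    fun X hX Y hY => inner_right_of_mem_orthogonal hX (hPle hY),
    fun X hX Y hY => inner_right_of_mem_orthogonal hX (hMle hY),
    fun X hX Y hY => (hAs.orthogonalFamily_eigenspaces.isOrtho (by norm_num)).inner_eq hX hY,
    fun X hX => map_mem_eigenspace_neg_of_anticomm hAf hX,
    fun X hX => neg_neg (1 : ℝ) ▸ map_mem_eigenspace_neg_of_anticomm hAf hX, by omega, by omega⟩

/-- Pointwise model of a weak almost S-manifold with `R_{X,Y}ξ_i = 0`: the operator
`A = Q⁻¹h` is self-adjoint, `A² = id` on `D`, and `V = ker f ⊕ D⁺ ⊕ D⁻` orthogonally,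
where `D⁺ = ker (A - id)` and `D⁻ = ker (A + id)`; moreover `f(D⁺) ⊆ D⁻`,
`f(D⁻) ⊆ D⁺`, and `dim D⁺ = dim D⁻ = n`. -/
theorem weak_almost_S_nullity_eigenspace_decomposition
    {V : Type*} [NormedAddCommGroup V] [InnerProductSpace ℝ V] [FiniteDimensional ℝ V]
    (n s : ℕ) (hn : 1 ≤ n) (hs : 1 ≤ s)
    (hdim : Module.finrank ℝ V = 2 * n + s)
    (f Q : V →ₗ[ℝ] V) (ξ : Fin s → V) (η : Fin s → V →ₗ[ℝ] ℝ)
    (hQ : Function.Bijective Q)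
    (hrank : Module.finrank ℝ (LinearMap.range f) = 2 * n)
    (hf2 : ∀ X, f (f X) = -(Q X) + ∑ i, η i X • ξ i)
    (hηξ : ∀ i j, η i (ξ j) = if i = j then (1 : ℝ) else 0)
    (hQξ : ∀ i, Q (ξ i) = ξ i)
    (hDf : ∀ X, (∀ i, η i X = 0) → ∀ i, η i (f X) = 0)
    (hmetric : ∀ X Y, ⟪f X, f Y⟫ = ⟪X, Q Y⟫ - ∑ i, η i X * η i Y)
    (h : V →ₗ[ℝ] V)
    (hhsa : ∀ X Y, ⟪h X, Y⟫ = ⟪X, h Y⟫)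
    (hhξ : ∀ i, h (ξ i) = 0)
    (hhQ : ∀ X, h (Q X) = Q (h X))
    (hhf : ∀ X, h (f X) = -(f (h X)))
    (hh2 : ∀ X ∈ (⨅ i, LinearMap.ker (η i) : Submodule ℝ V), h (h X) = Q (Q X))
    (A : V →ₗ[ℝ] V) (hA : Q ∘ₗ A = h) :
    (∀ X Y, ⟪A X, Y⟫ = ⟪X, A Y⟫) ∧
    (∀ X ∈ (⨅ i, LinearMap.ker (η i) : Submodule ℝ V), A (A X) = X) ∧
    (LinearMap.ker f ⊔ LinearMap.ker (A - LinearMap.id) ⊔ LinearMap.ker (A + LinearMap.id) = ⊤) ∧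
    (∀ X ∈ LinearMap.ker f, ∀ Y ∈ LinearMap.ker (A - LinearMap.id), ⟪X, Y⟫ = 0) ∧
    (∀ X ∈ LinearMap.ker f, ∀ Y ∈ LinearMap.ker (A + LinearMap.id), ⟪X, Y⟫ = 0) ∧
    (∀ X ∈ LinearMap.ker (A - LinearMap.id), ∀ Y ∈ LinearMap.ker (A + LinearMap.id),
      ⟪X, Y⟫ = 0) ∧
    (∀ X ∈ LinearMap.ker (A - LinearMap.id), f X ∈ LinearMap.ker (A + LinearMap.id)) ∧
    (∀ X ∈ LinearMap.ker (A + LinearMap.id), f X ∈ LinearMap.ker (A - LinearMap.id)) ∧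
    Module.finrank ℝ (LinearMap.ker (A - LinearMap.id)) = n ∧
    Module.finrank ℝ (LinearMap.ker (A + LinearMap.id)) = n :=
  weak_almost_S_nullity_eigenspace_decomposition_general n s hdim f Q ξ η hQ hrank hf2 hηξ hQξ hDf
    hmetric h hhsa hhξ hhQ hhf hh2 A hA
end

section
/- With the above hypotheses (the pointwise relations h_j h_i X = (1−κ)Q²X for X ∈ D coming from the (κ,μ)-nullity condition, with κ < 1), the endomorphisms all coincide: h_1 = h_2 = … = h_s. -/
/-!
On `D` every product `h_j h_i` equals `(1 - κ) Q²`, so `T = h_i - h_j` satisfies `T² = 0` there;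
as `T` is symmetric, `‖T Y‖² = ⟪Y, T² Y⟫ = 0`. Both operators also vanish on the `ξ_k`, and
`V = D ⊕ span ξ`, so `h_i = h_j`.
-/

open scoped RealInnerProductSpace

namespace LinearMap

theorem IsSymmetric.apply_eq_zero_of_apply_apply_eq_zero {𝕜 E : Type*} [RCLike 𝕜]
    [NormedAddCommGroup E] [InnerProductSpace 𝕜 E] {T : E →ₗ[𝕜] E} (hT : T.IsSymmetric)
    {x : E} (hx : T (T x) = 0) : T x = 0 := by
  rw [← inner_self_eq_zero (𝕜 := 𝕜), hT, hx, inner_zero_right]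

section Biorthogonal

variable {R M N ι : Type*} [CommRing R] [AddCommGroup M] [Module R M] [AddCommGroup N]
  [Module R N] [Fintype ι] [DecidableEq ι] {η : ι → M →ₗ[R] R} {ξ : ι → M}

theorem sub_sum_smul_mem_iInf_ker (hηξ : ∀ i j, η i (ξ j) = if i = j then 1 else 0) (x : M) :
    x - ∑ k, η k x • ξ k ∈ ⨅ i, ker (η i) := by
  simp only [Submodule.mem_iInf, mem_ker]
  intro i
  simp [map_sum, hηξ]

theorem ext_of_eqOn_iInf_ker (hηξ : ∀ i j, η i (ξ j) = if i = j then 1 else 0)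
    {A B : M →ₗ[R] N} (hξ : ∀ k, A (ξ k) = B (ξ k))
    (hD : ∀ x ∈ ⨅ i, ker (η i), A x = B x) : A = B := by
  ext x
  have hx : x = (x - ∑ k, η k x • ξ k) + ∑ k, η k x • ξ k := (sub_add_cancel _ _).symm
  rw [hx, map_add, map_add, hD _ (sub_sum_smul_mem_iInf_ker hηξ x)]
  simp only [map_sum, map_smul, hξ]

end Biorthogonal

end LinearMap

theorem weak_f_kappa_mu_h_tensors_coincide_general
    {V : Type*} [NormedAddCommGroup V] [InnerProductSpace ℝ V]
    (s : ℕ)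
    (Q : V →ₗ[ℝ] V) (ξ : Fin s → V) (η : Fin s → V →ₗ[ℝ] ℝ)
    (hηξ : ∀ i j, η i (ξ j) = if i = j then (1 : ℝ) else 0)
    (κ : ℝ) (h : Fin s → V →ₗ[ℝ] V)
    (hhsa : ∀ i, ∀ X Y, ⟪h i X, Y⟫ = ⟪X, h i Y⟫)
    (hhξ : ∀ i j, h i (ξ j) = 0)
    (hh2 : ∀ i j, ∀ X ∈ (⨅ i, LinearMap.ker (η i) : Submodule ℝ V),
      h j (h i X) = (1 - κ) • Q (Q X)) :
    ∀ i j, h i = h j := by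
  intro i j
  refine LinearMap.ext_of_eqOn_iInf_ker hηξ (fun k => by rw [hhξ, hhξ]) fun Y hY => ?_
  have hsym : (h i - h j).IsSymmetric := LinearMap.IsSymmetric.sub (hhsa i) (hhsa j)
  have hsq : (h i - h j) ((h i - h j) Y) = 0 := by
    simp only [LinearMap.sub_apply, map_sub, hh2 _ _ Y hY, sub_self]
  exact sub_eq_zero.mp (hsym.apply_eq_zero_of_apply_apply_eq_zero hsq)

/-- Pointwise form of the (κ,μ)-nullity relations `h_j h_i = (1-κ)Q²` on `D` with
`κ < 1`: all the operators coincide, `h_1 = … = h_s`. -/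
theorem weak_f_kappa_mu_h_tensors_coincide
    {V : Type*} [NormedAddCommGroup V] [InnerProductSpace ℝ V] [FiniteDimensional ℝ V]
    (n s : ℕ) (hn : 1 ≤ n) (hs : 1 ≤ s)
    (hdim : Module.finrank ℝ V = 2 * n + s)
    (f Q : V →ₗ[ℝ] V) (ξ : Fin s → V) (η : Fin s → V →ₗ[ℝ] ℝ)
    (hQ : Function.Bijective Q)
    (hrank : Module.finrank ℝ (LinearMap.range f) = 2 * n)
    (hf2 : ∀ X, f (f X) = -(Q X) + ∑ i, η i X • ξ i)
    (hηξ : ∀ i j, η i (ξ j) = if i = j then (1 : ℝ) else 0)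
    (hQξ : ∀ i, Q (ξ i) = ξ i)
    (hDf : ∀ X, (∀ i, η i X = 0) → ∀ i, η i (f X) = 0)
    (hmetric : ∀ X Y, ⟪f X, f Y⟫ = ⟪X, Q Y⟫ - ∑ i, η i X * η i Y)
    (κ : ℝ) (hκ : κ < 1) (h : Fin s → V →ₗ[ℝ] V)
    (hhsa : ∀ i, ∀ X Y, ⟪h i X, Y⟫ = ⟪X, h i Y⟫)
    (hhξ : ∀ i j, h i (ξ j) = 0)
    (hhQ : ∀ i, ∀ X, h i (Q X) = Q (h i X))
    (hh2 : ∀ i j, ∀ X ∈ (⨅ i, LinearMap.ker (η i) : Submodule ℝ V),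
      h j (h i X) = (1 - κ) • Q (Q X)) :
    ∀ i j, h i = h j :=
  weak_f_kappa_mu_h_tensors_coincide_general s Q ξ η hηξ κ h hhsa hhξ hh2
end

section
/- For a weak metric f-structure (f, Q, ξ_1, …, ξ_s, η^1, …, η^s, ⟨·,·⟩) on V with n = 1 (so dim V = 2+s and dim D = 2), there exists a real number β > 0 such that QX = β²X for all X ∈ D. -/
/-!
On `D` the structure equations read `f² = -Q` and `⟪f X, f Y⟫ = ⟪X, Q Y⟫`. As `Q` is injective, so
is `f` on `D`; hence `f` permutes `D` (whose dimension is at most `rank f = 2`), and the metric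
identity says that `f|_D` is skew-adjoint. For `X ≠ 0` in `D`, the vectors `X` and `f X` are
orthogonal and nonzero, so they span `D`; testing `f² X ∈ span {X, f X}` against `f X` and `X` gives
`f² X = -β² X` with `β = ‖f X‖ / ‖X‖`, and as `f²` commutes with `f` also `f² (f X) = -β² f X`.
-/

open scoped RealInnerProductSpace
open Module Submodule

section Skew

variable {W : Type*} [NormedAddCommGroup W] [InnerProductSpace ℝ W]

theorem span_pair_eq_top_of_inner_eq_zero [FiniteDimensional ℝ W] {x y : W}
    (hx : x ≠ 0) (hy : y ≠ 0) (hxy : ⟪x, y⟫ = 0) (hdim : finrank ℝ W ≤ 2) :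
    span ℝ {x, y} = ⊤ := by
  have hli : LinearIndependent ℝ ![x, y] := by
    refine linearIndependent_of_ne_zero_of_inner_eq_zero (by simp [Fin.forall_fin_two, hx, hy]) ?_
    intro i j hij
    fin_cases i <;> fin_cases j <;> simp_all [real_inner_comm]
  have hcard := hli.fintype_card_le_finrank
  rw [← Matrix.range_cons_cons_empty x y ![]]
  exact hli.span_eq_top_of_card_eq_finrank' (by simp only [Fintype.card_fin] at hcard ⊢; omega)

variable {g : W →ₗ[ℝ] W}

theorem inner_apply_eq_neg_inner_apply_of_surjective (hg : Function.Surjective g)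
    (h : ∀ x y, ⟪g x, g y⟫ = -⟪x, g (g y)⟫) (x y : W) : ⟪g x, y⟫ = -⟪x, g y⟫ := by
  obtain ⟨z, rfl⟩ := hg y
  exact h x z

theorem inner_apply_self_eq_zero_of_skew (hskew : ∀ x y, ⟪g x, y⟫ = -⟪x, g y⟫) (x : W) :
    ⟪g x, x⟫ = 0 := by
  have := hskew x x
  rw [real_inner_comm (g x) x] at this
  linarith

theorem exists_pos_apply_apply_eq_neg_sq_smul_of_skew [FiniteDimensional ℝ W]
    (hskew : ∀ x y, ⟪g x, y⟫ = -⟪x, g y⟫) (hg : Function.Injective g) (hdim : finrank ℝ W ≤ 2) :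
    ∃ β : ℝ, 0 < β ∧ ∀ x, g (g x) = -(β ^ 2 • x) := by
  rcases subsingleton_or_nontrivial W with _ | _
  · exact ⟨1, one_pos, fun x => Subsingleton.elim _ _⟩
  obtain ⟨x, hx⟩ := exists_ne (0 : W)
  have hgx : g x ≠ 0 := fun h => hx (hg (h.trans g.map_zero.symm))
  have hxgx : ⟪x, g x⟫ = 0 := by rw [real_inner_comm, inner_apply_self_eq_zero_of_skew hskew]
  have hspan := span_pair_eq_top_of_inner_eq_zero hx hgx hxgx hdim
  obtain ⟨a, b, hab⟩ := mem_span_pair.1 (hspan ▸ mem_top : g (g x) ∈ span ℝ {x, g x})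
  have hb : b = 0 := by
    have := inner_apply_self_eq_zero_of_skew hskew (g x)
    rw [← hab, inner_add_left, real_inner_smul_left, real_inner_smul_left, hxgx,
      mul_zero, zero_add] at this
    exact (mul_eq_zero.1 this).resolve_right (real_inner_self_pos.2 hgx).ne'
  set β := ‖g x‖ / ‖x‖
  have ha : a = -β ^ 2 := by
    have := hskew (g x) x
    rw [← hab, hb, zero_smul, add_zero, real_inner_smul_left, real_inner_self_eq_norm_sq,
      real_inner_self_eq_norm_sq] at this
    rw [div_pow, ← neg_div, eq_div_iff (by positivity)]
    linarith
  have hgg : g ∘ₗ g = -(β ^ 2) • LinearMap.id := by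
    refine LinearMap.ext_on hspan ?_
    rintro _ (rfl | rfl) <;> simp [← hab, hb, ha]
  refine ⟨β, by positivity, fun y => ?_⟩
  simpa using LinearMap.congr_fun hgg y

end Skew

theorem exists_pos_forall_mem_eq_sq_smul_of_apply_apply_eq_neg {V : Type*} [NormedAddCommGroup V]
    [InnerProductSpace ℝ V] [FiniteDimensional ℝ V] {f Q : V →ₗ[ℝ] V} {D : Submodule ℝ V}
    (hQ : Function.Injective Q) (hfD : ∀ X ∈ D, f X ∈ D) (hf2 : ∀ X ∈ D, f (f X) = -Q X)
    (hmetric : ∀ X ∈ D, ∀ Y ∈ D, ⟪f X, f Y⟫ = ⟪X, Q Y⟫)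
    (hrank : finrank ℝ (LinearMap.range f) ≤ 2) :
    ∃ β : ℝ, 0 < β ∧ ∀ X ∈ D, Q X = β ^ 2 • X := by
  let g := f.restrict hfD
  have hg_inj : Function.Injective g := by
    refine (injective_iff_map_eq_zero g).2 fun X hX => ?_
    have hfX : f X = 0 := congrArg Subtype.val hX
    have hQX : Q X = 0 := by simpa [hfX] using (hf2 X X.2).symm
    exact Subtype.ext (hQ (hQX.trans Q.map_zero.symm))
  have hg_metric : ∀ X Y : D, ⟪g X, g Y⟫ = -⟪X, g (g Y)⟫ := fun X Y => by
    simp [g, hf2 Y Y.2, hmetric X X.2 Y Y.2]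
  have hdim : finrank ℝ D ≤ 2 := calc
    finrank ℝ D = finrank ℝ (LinearMap.range (D.subtype ∘ₗ g)) :=
      (LinearMap.finrank_range_of_inj (Subtype.val_injective.comp hg_inj)).symm
    _ ≤ finrank ℝ (LinearMap.range f) := Submodule.finrank_mono (by
        rintro _ ⟨X, rfl⟩; exact LinearMap.mem_range_self f X)
    _ ≤ 2 := hrank
  obtain ⟨β, hβ, hgg⟩ := exists_pos_apply_apply_eq_neg_sq_smul_of_skew
    (inner_apply_eq_neg_inner_apply_of_surjective (LinearMap.injective_iff_surjective.1 hg_inj)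
      hg_metric) hg_inj hdim
  refine ⟨β, hβ, fun X hX => ?_⟩
  simpa [g, hf2 X hX] using congrArg Subtype.val (hgg ⟨X, hX⟩)

theorem weak_metric_f_structure_dim_two_Q_is_scalar_on_D_general
    {V : Type*} [NormedAddCommGroup V] [InnerProductSpace ℝ V] [FiniteDimensional ℝ V]
    (s : ℕ)
    (f Q : V →ₗ[ℝ] V) (ξ : Fin s → V) (η : Fin s → V →ₗ[ℝ] ℝ)
    (hQ : Function.Bijective Q)
    (hrank : Module.finrank ℝ (LinearMap.range f) = 2)
    (hf2 : ∀ X, f (f X) = -(Q X) + ∑ i, η i X • ξ i)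
    (hDf : ∀ X, (∀ i, η i X = 0) → ∀ i, η i (f X) = 0)
    (hmetric : ∀ X Y, ⟪f X, f Y⟫ = ⟪X, Q Y⟫ - ∑ i, η i X * η i Y) :
    ∃ β : ℝ, 0 < β ∧
      ∀ X ∈ (⨅ i, LinearMap.ker (η i) : Submodule ℝ V), Q X = β ^ 2 • X := by
  have mem_D : ∀ X, X ∈ (⨅ i, LinearMap.ker (η i) : Submodule ℝ V) ↔ ∀ i, η i X = 0 := by
    simp [Submodule.mem_iInf]
  refine exists_pos_forall_mem_eq_sq_smul_of_apply_apply_eq_neg hQ.injective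
    (fun X hX => (mem_D _).2 (hDf X ((mem_D X).1 hX))) (fun X hX => ?_) (fun X hX Y _ => ?_)
    hrank.le
  · simpa [(mem_D X).1 hX] using hf2 X
  · simpa [(mem_D X).1 hX] using hmetric X Y

/-- For a weak metric f-structure on `V` with `n = 1` (so `dim V = 2 + s` and
`dim D = 2`), there exists `β > 0` with `Q X = β² X` for all `X ∈ D`. -/
theorem weak_metric_f_structure_dim_two_Q_is_scalar_on_D
    {V : Type*} [NormedAddCommGroup V] [InnerProductSpace ℝ V] [FiniteDimensional ℝ V]
    (s : ℕ) (hs : 1 ≤ s)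
    (hdim : Module.finrank ℝ V = 2 + s)
    (f Q : V →ₗ[ℝ] V) (ξ : Fin s → V) (η : Fin s → V →ₗ[ℝ] ℝ)
    (hQ : Function.Bijective Q)
    (hrank : Module.finrank ℝ (LinearMap.range f) = 2)
    (hf2 : ∀ X, f (f X) = -(Q X) + ∑ i, η i X • ξ i)
    (hηξ : ∀ i j, η i (ξ j) = if i = j then (1 : ℝ) else 0)
    (hQξ : ∀ i, Q (ξ i) = ξ i)
    (hDf : ∀ X, (∀ i, η i X = 0) → ∀ i, η i (f X) = 0)
    (hmetric : ∀ X Y, ⟪f X, f Y⟫ = ⟪X, Q Y⟫ - ∑ i, η i X * η i Y) :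
    ∃ β : ℝ, 0 < β ∧
      ∀ X ∈ (⨅ i, LinearMap.ker (η i) : Submodule ℝ V), Q X = β ^ 2 • X :=
  weak_metric_f_structure_dim_two_Q_is_scalar_on_D_general s f Q ξ η hQ hrank hf2 hDf hmetric
end
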